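/- arXiv:math-ph/0004011 — 2 statements merged into one kernel-verified Lean document; each statement's English description precedes it below -/
import Mathlib

section
/- Let A be a symmetric real n×n matrix (A = Aᵀ) and let c be an antisymmetric real n×n matrix satisfying the cocycle condition c_{ij} + c_{jk} = c_{ik} for all i, j, k. Then the bilinear form W(u, v) = Σ_{j,k} c_{jk} A_{jk} u_j v_k restricted to the kernel of A is antisymmetric: W(u,v) = −W(v,u) for all u, v ∈ ker A; in fact W(u,v) = Σ_{j,k} c_{jk} A_{jk} u_j v_k = Σ_j χ(j) ((Au)_j v_j − u_j (Av)_j) for χ with c_{jk} = χ(k) − χ(j), which vanishes term-by-term appropriately on ker A. -/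
/-!
Writing `c j k = χ k - χ j` splits the form into two sums, each of which contracts one index
against `A`: `W(u, v) = Σ_j χ j ((uᵀA)_j v_j - u_j (Av)_j)`, and `uᵀA = Au` for symmetric `A`.
On `ker A` every term vanishes, so there `W` is identically zero and in particular antisymmetric.
-/

open Matrix

section Wronskian

variable {ι R : Type*} [Fintype ι] [CommRing R]

theorem sum_sum_sub_mul_eq_sum_vecMul_sub_mulVec (A : Matrix ι ι R) (χ u v : ι → R) :
    ∑ j, ∑ k, (χ k - χ j) * A j k * u j * v k =
      ∑ j, χ j * ((u ᵥ* A) j * v j - u j * (A *ᵥ v) j) := by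
  have h_left : ∑ j, ∑ k, χ k * A j k * u j * v k = ∑ k, χ k * ((u ᵥ* A) k * v k) := by
    rw [Finset.sum_comm]
    refine Finset.sum_congr rfl fun k _ => ?_
    simp only [vecMul, dotProduct, Finset.sum_mul, Finset.mul_sum]
    exact Finset.sum_congr rfl fun j _ => by ring
  have h_right : ∑ j, ∑ k, χ j * A j k * u j * v k = ∑ j, χ j * (u j * (A *ᵥ v) j) := by
    refine Finset.sum_congr rfl fun j _ => ?_
    simp only [mulVec, dotProduct, Finset.mul_sum]
    exact Finset.sum_congr rfl fun k _ => by ring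
  simp only [sub_mul, Finset.sum_sub_distrib, mul_sub, h_left, h_right]

theorem sum_sum_sub_mul_eq_sum_mulVec_sub_mulVec {A : Matrix ι ι R} (hA : A.IsSymm)
    (χ u v : ι → R) :
    ∑ j, ∑ k, (χ k - χ j) * A j k * u j * v k =
      ∑ j, χ j * ((A *ᵥ u) j * v j - u j * (A *ᵥ v) j) := by
  have h_vecMul : u ᵥ* A = A *ᵥ u := by rw [← vecMul_transpose, hA.eq]
  rw [sum_sum_sub_mul_eq_sum_vecMul_sub_mulVec, h_vecMul]

theorem sum_sum_sub_mul_eq_zero_of_mulVec_eq_zero {A : Matrix ι ι R} (hA : A.IsSymm)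
    (χ : ι → R) {u v : ι → R} (hu : A *ᵥ u = 0) (hv : A *ᵥ v = 0) :
    ∑ j, ∑ k, (χ k - χ j) * A j k * u j * v k = 0 := by
  simp [sum_sum_sub_mul_eq_sum_mulVec_sub_mulVec hA, hu, hv]

end Wronskian

theorem symplectic_wronskian_general {n : ℕ} (A : Matrix (Fin n) (Fin n) ℝ) (hA : A.IsSymm)
    (c : Fin n → Fin n → ℝ)
    (χ : Fin n → ℝ) (hχ : ∀ j k, c j k = χ k - χ j) :
    (∀ u v : Fin n → ℝ,
      ∑ j, ∑ k, c j k * A j k * u j * v k =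
        ∑ j, χ j * ((A.mulVec u) j * v j - u j * (A.mulVec v) j)) ∧
    (∀ u v : Fin n → ℝ, A.mulVec u = 0 → A.mulVec v = 0 →
      ∑ j, ∑ k, c j k * A j k * u j * v k =
        -(∑ j, ∑ k, c j k * A j k * v j * u k)) := by
  obtain rfl : c = fun j k => χ k - χ j := funext₂ hχ
  refine ⟨sum_sum_sub_mul_eq_sum_mulVec_sub_mulVec hA χ, fun u v hu hv => ?_⟩
  rw [sum_sum_sub_mul_eq_zero_of_mulVec_eq_zero hA χ hu hv,
    sum_sum_sub_mul_eq_zero_of_mulVec_eq_zero hA χ hv hu, neg_zero]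

/-- the symplectic Wronskian.  Let `A` be a symmetric real `n × n` matrix
and `c` an antisymmetric matrix satisfying the cocycle condition `c i j + c j k = c i k`.
Then for any `χ` with `c j k = χ k − χ j`, the bilinear form
`W(u,v) = Σ_{j,k} c j k * A j k * u j * v k` satisfies
`W(u,v) = Σ_j χ j * ((Au)_j v_j − u_j (Av)_j)`, and on `ker A` it is antisymmetric:
`W(u,v) = −W(v,u)`. -/
theorem symplectic_wronskian {n : ℕ} (A : Matrix (Fin n) (Fin n) ℝ) (hA : A.IsSymm)
    (c : Fin n → Fin n → ℝ)
    (hanti : ∀ j k, c j k = -(c k j))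
    (hco : ∀ i j k, c i j + c j k = c i k)
    (χ : Fin n → ℝ) (hχ : ∀ j k, c j k = χ k - χ j) :
    (∀ u v : Fin n → ℝ,
      ∑ j, ∑ k, c j k * A j k * u j * v k =
        ∑ j, χ j * ((A.mulVec u) j * v j - u j * (A.mulVec v) j)) ∧
    (∀ u v : Fin n → ℝ, A.mulVec u = 0 → A.mulVec v = 0 →
      ∑ j, ∑ k, c j k * A j k * u j * v k =
        -(∑ j, ∑ k, c j k * A j k * v j * u k)) :=
  symplectic_wronskian_general A hA c χ hχ
end

section
/- Let Γ be a graph obtained from a finite graph by attaching finitely many half-infinite tails (rays). Then H_1^{open}(Γ;ℝ), the space of locally finite 1-cycles of Γ, has dimension equal to b + t − 1 if t ≥ 1 (where b is the first Betti number of the finite part and t the number of tails), with the tail contributions generated by chains that are constant 1 along one tail and −1 along another. -/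
open SimpleGraph

variable {V : Type*} [Fintype V] [DecidableEq V]

/-- The graph obtained from a finite graph `G` by attaching `t` half-infinite tails (rays),
the `i`-th tail being attached at the vertex `a i`.  The vertices of the `i`-th tail are the
pairs `(i, n)`, `n : ℕ`, with `(i, 0)` joined to `a i` and `(i, n)` joined to `(i, n+1)`. -/
def tailGraph (G : SimpleGraph V) (t : ℕ) (a : Fin t → V) :
    SimpleGraph (V ⊕ Fin t × ℕ) where
  Adj x y := match x, y with
    | .inl u, .inl v => G.Adj u v
    | .inl u, .inr (i, n) => n = 0 ∧ u = a i
    | .inr (i, n), .inl u => n = 0 ∧ u = a i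
    | .inr (i, n), .inr (j, m) => i = j ∧ (m = n + 1 ∨ n = m + 1)
  symm := by
    constructor
    rintro (u | ⟨i, n⟩) (v | ⟨j, m⟩) h
    · exact G.adj_symm h
    · exact h
    · exact h
    · exact ⟨h.1.symm, h.2.symm⟩
  loopless := by
    constructor
    rintro (u | ⟨i, n⟩) h
    · exact G.irrefl h
    · rcases h.2 with h2 | h2 <;> omega

/-- The space of locally finite real 1-cycles of the graph `tailGraph G t a`, i.e.
`H₁^{open} = ker ∂` on locally finite 1-chains (there are no 2-chains on a graph).
A 1-chain consists of: an antisymmetric function `c.1` on the darts of the finite part `G`;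
coefficients `c.2.1 i` on the attaching edge from `a i` to the tail vertex `(i,0)`; and
coefficients `c.2.2 (i, n)` on the tail edge from `(i, n)` to `(i, n+1)`.  The cycle
condition is the vanishing of the boundary at every vertex. -/
def tailCycleSpace (G : SimpleGraph V) [DecidableRel G.Adj] (t : ℕ) (a : Fin t → V) :
    Submodule ℝ ((G.Dart → ℝ) × (Fin t → ℝ) × (Fin t × ℕ → ℝ)) where
  carrier := {c |
    (∀ d : G.Dart, c.1 d.symm = -c.1 d) ∧
    (∀ v : V, (∑ d : G.Dart, if d.toProd.2 = v then c.1 d else 0)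
      - (∑ i : Fin t, if a i = v then c.2.1 i else 0) = 0) ∧
    (∀ i : Fin t, c.2.1 i - c.2.2 (i, 0) = 0) ∧
    (∀ i : Fin t, ∀ n : ℕ, c.2.2 (i, n) - c.2.2 (i, n + 1) = 0)}
  zero_mem' := by
    refine ⟨fun d => by simp, fun v => by simp, fun i => by simp, fun i n => by simp⟩
  add_mem' := by
    rintro x y ⟨hx1, hx2, hx3, hx4⟩ ⟨hy1, hy2, hy3, hy4⟩
    refine ⟨fun d => ?_, fun v => ?_, fun i => ?_, fun i n => ?_⟩
    · simp only [Prod.fst_add, Pi.add_apply, hx1 d, hy1 d]; ring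
    · have e1 : ∀ d : G.Dart, (if d.toProd.2 = v then (x.1 + y.1) d else 0) =
          (if d.toProd.2 = v then x.1 d else 0) + (if d.toProd.2 = v then y.1 d else 0) := by
        intro d; by_cases h : d.toProd.2 = v <;> simp [h]
      have e2 : ∀ i : Fin t, (if a i = v then (x.2.1 + y.2.1) i else 0) =
          (if a i = v then x.2.1 i else 0) + (if a i = v then y.2.1 i else 0) := by
        intro i; by_cases h : a i = v <;> simp [h]
      have h1 := hx2 v
      have h2 := hy2 v
      simp only [Prod.fst_add, Prod.snd_add]
      rw [Finset.sum_congr rfl (fun d _ => e1 d), Finset.sum_congr rfl (fun i _ => e2 i),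
        Finset.sum_add_distrib, Finset.sum_add_distrib]
      linarith
    · have h1 := hx3 i; have h2 := hy3 i
      simp only [Prod.snd_add, Prod.fst_add, Pi.add_apply]
      linarith
    · have h1 := hx4 i n; have h2 := hy4 i n
      simp only [Prod.snd_add, Pi.add_apply]
      linarith
  smul_mem' := by
    rintro r x ⟨hx1, hx2, hx3, hx4⟩
    refine ⟨fun d => ?_, fun v => ?_, fun i => ?_, fun i n => ?_⟩
    · simp only [Prod.smul_fst, Pi.smul_apply, smul_eq_mul, hx1 d]; ring
    · have e1 : ∀ d : G.Dart, (if d.toProd.2 = v then (r • x.1) d else 0) =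
          r * (if d.toProd.2 = v then x.1 d else 0) := by
        intro d; by_cases h : d.toProd.2 = v <;> simp [h]
      have e2 : ∀ i : Fin t, (if a i = v then (r • x.2.1) i else 0) =
          r * (if a i = v then x.2.1 i else 0) := by
        intro i; by_cases h : a i = v <;> simp [h]
      have h1 := hx2 v
      simp only [Prod.smul_fst, Prod.smul_snd]
      rw [Finset.sum_congr rfl (fun d _ => e1 d), Finset.sum_congr rfl (fun i _ => e2 i),
        ← Finset.mul_sum, ← Finset.mul_sum]
      linear_combination r * h1
    · have h1 := hx3 i
      simp only [Prod.smul_snd, Prod.smul_fst, Pi.smul_apply, smul_eq_mul]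
      linear_combination r * h1
    · have h1 := hx4 i n
      simp only [Prod.smul_snd, Pi.smul_apply, smul_eq_mul]
      linear_combination r * h1

/-! A locally finite cycle is constant along each tail, equal to its value on the attaching edge,
so it is determined by a finite datum: an antisymmetric function `f` on the darts of `G` and the
tail values `x`, subject to `∂f = Σᵢ xᵢ [aᵢ]`. For connected `G` and at least one tail the map
`(f, x) ↦ ∂f - Σᵢ xᵢ [aᵢ]` is onto `ℝ^V`, so by rank-nullity the cycle space has dimension
`E + t - V = (E + 1 - V) + t - 1`. The cycle that is `1` on tail `i` and `-1` on tail `j` closes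
up along a path from `a j` to `a i` in `G`. -/

section FiberSum

variable {ι V : Type*} (R : Type*) [Fintype ι] [DecidableEq V] [Semiring R]

noncomputable def fiberSum (e : ι → V) : (ι → R) →ₗ[R] V → R :=
  Fintype.linearCombination R fun i => Pi.single (e i) 1

variable {R}

theorem fiberSum_apply (e : ι → V) (x : ι → R) (v : V) :
    fiberSum R e x v = ∑ i, if e i = v then x i else 0 := by
  simp [fiberSum, Fintype.linearCombination_apply, Pi.single_apply, eq_comm]

theorem fiberSum_single [DecidableEq ι] (e : ι → V) (i : ι) :
    fiberSum R e (Pi.single i 1) = Pi.single (e i) 1 := by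
  simp [fiberSum, Fintype.linearCombination_apply_single]

end FiberSum

namespace SimpleGraph

variable {V : Type*} (G : SimpleGraph V) (R : Type*) [CommRing R]

def chainSpace : Submodule R (G.Dart → R) where
  carrier := {f | ∀ d, f d.symm = -f d}
  add_mem' {f g} hf hg d := by simp [hf d, hg d, add_comm]
  zero_mem' := by simp
  smul_mem' r f hf d := by simp [hf d]

theorem exists_dart_edge_eq (e : G.edgeSet) : ∃ d : G.Dart, d.edge = e := by
  obtain ⟨e, he⟩ := e
  induction e using Sym2.ind with
  | h u w => exact ⟨⟨(u, w), he⟩, rfl⟩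

variable {G} in
theorem orientation_eq_or_eq_symm {o : G.edgeSet → G.Dart} (ho : ∀ e, (o e).edge = e)
    (d : G.Dart) : o ⟨d.edge, d.edge_mem⟩ = d ∨ o ⟨d.edge, d.edge_mem⟩ = d.symm :=
  (G.dart_edge_eq_iff _ _).1 (ho _)

theorem finrank_chainSpace [Nontrivial R] [Fintype V] [DecidableRel G.Adj] :
    Module.finrank R (G.chainSpace R) = Fintype.card G.edgeSet := by
  classical
  choose o ho using G.exists_dart_edge_eq
  let e : G.chainSpace R ≃ₗ[R] (G.edgeSet → R) :=
  { toFun f e := f.1 (o e)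
    invFun g := ⟨fun d => if o ⟨d.edge, d.edge_mem⟩ = d then g ⟨d.edge, d.edge_mem⟩ else
      -g ⟨d.edge, d.edge_mem⟩, fun d => by
        simp only [Dart.edge_symm]
        rcases orientation_eq_or_eq_symm ho d with h | h <;> simp [h, d.symm_ne, d.symm_ne.symm]⟩
    map_add' f g := rfl
    map_smul' r f := rfl
    left_inv f := by
      ext d
      rcases orientation_eq_or_eq_symm ho d with h | h <;> simp [h, d.symm_ne, f.2 d]
    right_inv g := by
      funext e
      have he : (⟨(o e).edge, (o e).edge_mem⟩ : G.edgeSet) = e := Subtype.ext (ho e)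
      simp [he] }
  rw [e.finrank_eq, Module.finrank_fintype_fun_eq_card]

noncomputable def extendAlongTails (ι : Type*) :
    (G.chainSpace R × (ι → R)) →ₗ[R] (G.Dart → R) × (ι → R) × (ι × ℕ → R) :=
  (G.chainSpace R).subtype.prodMap (LinearMap.id.prod (LinearMap.funLeft R R Prod.fst))

theorem extendAlongTails_injective (ι : Type*) : Function.Injective (G.extendAlongTails R ι) :=
  fun _ _ h => Prod.ext (Subtype.ext (congrArg Prod.fst h)) (congrArg (·.2.1) h)

variable [DecidableEq V]

def dartChain (d : G.Dart) : G.Dart → R :=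
  Pi.single d 1 - Pi.single d.symm 1

theorem dartChain_mem (d : G.Dart) : G.dartChain R d ∈ G.chainSpace R := by
  intro e
  simp only [dartChain, Pi.sub_apply, Pi.single_apply, Dart.symm_involutive.eq_iff,
    eq_comm (a := e)]
  abel

variable [Fintype V] [DecidableRel G.Adj]

noncomputable abbrev boundary : (G.Dart → R) →ₗ[R] V → R :=
  fiberSum R fun d : G.Dart => d.snd

theorem boundary_dartChain (d : G.Dart) :
    G.boundary R (G.dartChain R d) = Pi.single d.snd 1 - Pi.single d.fst 1 := by
  simp [dartChain, fiberSum_single]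

variable {G} in
theorem Reachable.single_sub_single_mem_map_boundary {u v : V} (h : G.Reachable u v) :
    Pi.single v 1 - Pi.single u 1 ∈ (G.chainSpace R).map (G.boundary R) := by
  obtain ⟨p⟩ := h
  induction p with
  | nil => simp
  | cons hadj p ih =>
    have hd := G.boundary_dartChain R ⟨(_, _), hadj⟩
    simpa using add_mem ih ⟨_, G.dartChain_mem R _, hd⟩

variable {ι : Type*} [Fintype ι]

noncomputable def tailBoundary (a : ι → V) : (G.chainSpace R × (ι → R)) →ₗ[R] V → R :=
  (G.boundary R ∘ₗ (G.chainSpace R).subtype).coprod (-fiberSum R a)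

theorem tailBoundary_apply (a : ι → V) (p : G.chainSpace R × (ι → R)) :
    G.tailBoundary R a p = G.boundary R p.1 - fiberSum R a p.2 := by
  simp [tailBoundary, sub_eq_add_neg]

theorem range_tailBoundary (hG : G.Connected) [Nonempty ι] (a : ι → V) :
    LinearMap.range (G.tailBoundary R a) = ⊤ := by
  classical
  obtain ⟨i₀⟩ := ‹Nonempty ι›
  have hbase : Pi.single (a i₀) 1 ∈ LinearMap.range (G.tailBoundary R a) :=
    ⟨(0, -Pi.single i₀ 1), by simp [tailBoundary_apply, fiberSum_single]⟩
  have hmap : (G.chainSpace R).map (G.boundary R) ≤ LinearMap.range (G.tailBoundary R a) := by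
    rintro _ ⟨f, hf, rfl⟩
    exact ⟨(⟨f, hf⟩, 0), by simp [tailBoundary_apply]⟩
  rw [eq_top_iff, ← (Pi.basisFun R V).span_eq, Submodule.span_le]
  rintro _ ⟨v, rfl⟩
  have hv := hmap ((hG.preconnected (a i₀) v).single_sub_single_mem_map_boundary R)
  simpa [Pi.basisFun_apply] using add_mem hv hbase

theorem finrank_ker_tailBoundary_add_card (K : Type*) [Field K] (hG : G.Connected) [Nonempty ι]
    (a : ι → V) :
    Module.finrank K (LinearMap.ker (G.tailBoundary K a)) + Fintype.card V =
      Fintype.card G.edgeSet + Fintype.card ι := by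
  have h := LinearMap.finrank_range_add_finrank_ker (G.tailBoundary K a)
  rw [G.range_tailBoundary K hG, finrank_top, Module.finrank_fintype_fun_eq_card,
    Module.finrank_prod, finrank_chainSpace, Module.finrank_fintype_fun_eq_card] at h
  omega

end SimpleGraph

section TailCycles

variable {G : SimpleGraph V} [DecidableRel G.Adj] {t : ℕ} {a : Fin t → V}

theorem tail_eq_of_mem_tailCycleSpace {c : (G.Dart → ℝ) × (Fin t → ℝ) × (Fin t × ℕ → ℝ)}
    (hc : c ∈ tailCycleSpace G t a) (i : Fin t) (n : ℕ) : c.2.2 (i, n) = c.2.1 i := by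
  induction n with
  | zero => linarith [hc.2.2.1 i]
  | succ n ih => linarith [hc.2.2.2 i n]

theorem tailCycleSpace_eq_map :
    tailCycleSpace G t a =
      (LinearMap.ker (G.tailBoundary ℝ a)).map (G.extendAlongTails ℝ (Fin t)) := by
  ext c
  simp only [Submodule.mem_map, LinearMap.mem_ker, G.tailBoundary_apply, sub_eq_zero,
    funext_iff, fiberSum_apply]
  constructor
  · intro hc
    refine ⟨(⟨c.1, hc.1⟩, c.2.1), fun v => sub_eq_zero.1 (hc.2.1 v), ?_⟩
    exact Prod.ext rfl <| Prod.ext rfl <|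
      funext fun q => (tail_eq_of_mem_tailCycleSpace hc q.1 q.2).symm
  · rintro ⟨p, hp, rfl⟩
    exact ⟨p.1.2, fun v => sub_eq_zero.2 (hp v), fun _ => sub_self _, fun _ _ => sub_self _⟩

theorem finrank_tailCycleSpace :
    Module.finrank ℝ (tailCycleSpace G t a) =
      Module.finrank ℝ (LinearMap.ker (G.tailBoundary ℝ a)) := by
  rw [tailCycleSpace_eq_map]
  exact (Submodule.equivMapOfInjective _ (G.extendAlongTails_injective ℝ _) _).finrank_eq.symm

theorem exists_mem_tailCycleSpace (hG : G.Connected) (i j : Fin t) :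
    ∃ c ∈ tailCycleSpace G t a,
      ∀ k n, c.2.2 (k, n) = (Pi.single i 1 - Pi.single j 1 : Fin t → ℝ) k := by
  obtain ⟨f, hf, hbf⟩ := (hG.preconnected (a j) (a i)).single_sub_single_mem_map_boundary ℝ
  refine ⟨G.extendAlongTails ℝ _ (⟨f, hf⟩, Pi.single i 1 - Pi.single j 1), ?_, fun _ _ => rfl⟩
  rw [tailCycleSpace_eq_map]
  refine Submodule.mem_map_of_mem ?_
  simp [G.tailBoundary_apply, hbf, fiberSum_single]

end TailCycles

/-- Let `Γ` be obtained from a finite connected graph `G` (first Betti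
number `b = E − V + 1`) by attaching `t ≥ 1` half-infinite tails.  Then `H₁^{open}(Γ;ℝ)`,
the space of locally finite 1-cycles of `Γ`, has dimension `b + t − 1`, and the tail
contributions are generated by cycles that are constantly `1` along one tail, constantly `−1`
along another, and `0` along all remaining tails. -/
theorem tailGraph_H1_open_rank (G : SimpleGraph V) [DecidableRel G.Adj]
    (hG : G.Connected) (t : ℕ) (ht : 1 ≤ t) (a : Fin t → V) :
    Module.finrank ℝ (tailCycleSpace G t a) =
      (G.edgeFinset.card + 1 - Fintype.card V) + t - 1 ∧
    ∀ i j : Fin t, i ≠ j → ∃ c ∈ tailCycleSpace G t a,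
      (∀ n : ℕ, c.2.2 (i, n) = 1) ∧ (∀ n : ℕ, c.2.2 (j, n) = -1) ∧
      (∀ k : Fin t, k ≠ i → k ≠ j → ∀ n : ℕ, c.2.2 (k, n) = 0) := by
  have : Nonempty (Fin t) := ⟨⟨0, ht⟩⟩
  refine ⟨?_, fun i j hij => ?_⟩
  · have hdim := G.finrank_ker_tailBoundary_add_card ℝ hG a
    have hV := hG.card_vert_le_card_edgeSet_add_one
    rw [Nat.card_eq_fintype_card, Nat.card_eq_fintype_card] at hV
    rw [finrank_tailCycleSpace, edgeFinset_card]
    simp only [Fintype.card_fin] at hdim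
    omega
  · obtain ⟨c, hc, hcoef⟩ := exists_mem_tailCycleSpace (a := a) hG i j
    exact ⟨c, hc, fun n => by simp [hcoef, hij], fun n => by simp [hcoef, hij.symm],
      fun k hki hkj n => by simp [hcoef, hki, hkj]⟩
end
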